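/- arXiv:2506.08910 — 2 statements merged into one kernel-verified Lean document; each statement's English description precedes it below -/
import Mathlib

section
/- If P and Q are polynomials (viewed as differential operators) such that P(d/dx) x^N = p(x) and Q(d/dx) x^N = q(x), where p and q are monic of degree N, then (p ⊞_N q)(x) = P(d/dx) Q(d/dx) x^N. -/
open Polynomial Finset

/-- Normalized repeated derivative `∂_{k|N} p = ((N-k)!/N!) p^{(N-k)}`. -/
noncomputable def dOp (N k : ℕ) (p : Polynomial ℝ) : Polynomial ℝ :=
  C ((Nat.factorial (N - k) : ℝ) / (Nat.factorial N : ℝ)) * (derivative^[N - k] p)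

/-- Dilation of a degree-`d` polynomial: `(𝒟_a p)(x) = a^d p(x/a)`. -/
noncomputable def dil (d : ℕ) (a : ℝ) (p : Polynomial ℝ) : Polynomial ℝ :=
  C (a ^ d) * p.comp (C a⁻¹ * X)

/-- Probabilists' Hermite polynomial. -/
noncomputable def hermiteP (k : ℕ) : Polynomial ℝ :=
  ∑ j ∈ Finset.range (k / 2 + 1),
    C ((Nat.factorial k : ℝ) * (-1) ^ j /
        ((Nat.factorial j : ℝ) * (Nat.factorial (k - 2 * j)) * 2 ^ j)) * X ^ (k - 2 * j)

/-- The signed coefficients `a_k = (-1)^k coeff_{N-k}(p)` of a monic degree-`N` polynomial. -/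
noncomputable def coeffSeq (N : ℕ) (p : Polynomial ℝ) (k : ℕ) : ℝ :=
  (-1 : ℝ) ^ k * p.coeff (N - k)

/-- `κ : ℕ → ℝ` is the sequence of finite free cumulants associated to the signed
coefficient sequence `a` of a monic degree-`N` polynomial. -/
noncomputable def cumulantRel (N : ℕ) (a κ : ℕ → ℝ) : Prop :=
  ∀ k, 1 ≤ k → k ≤ N →
    a k = ((Nat.descFactorial N k : ℝ) / ((N : ℝ) ^ k * (Nat.factorial k : ℝ))) *
      ∑ π : Finpartition (Finset.univ : Finset (Fin k)),
        (-1 : ℝ) ^ (k - π.parts.card) * (N : ℝ) ^ π.parts.card *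
          ∏ V ∈ π.parts, ((Nat.factorial (V.card - 1) : ℝ) * κ V.card)

/-- Finite free additive convolution `p ⊞_N q`. -/
noncomputable def ffconv (N : ℕ) (p q : Polynomial ℝ) : Polynomial ℝ :=
  X ^ N + ∑ k ∈ Finset.Icc 1 N,
    C ((-1 : ℝ) ^ k *
      ∑ ij ∈ Finset.HasAntidiagonal.antidiagonal k,
        ((Nat.factorial (N - ij.1) : ℝ) * (Nat.factorial (N - ij.2) : ℝ) /
            ((Nat.factorial N : ℝ) * (Nat.factorial (N - k) : ℝ))) *
          coeffSeq N p ij.1 * coeffSeq N q ij.2) * X ^ (N - k)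

/-- `j`-th moment of the empirical root distribution of `p`. -/
noncomputable def momentP (j : ℕ) (p : Polynomial ℝ) : ℝ :=
  (1 / (p.natDegree : ℝ)) * (p.roots.map (fun r => r ^ j)).sum

/-- Apply the differential operator `P(d/dx)` to the polynomial `r`. -/
noncomputable def applyDiffOp (P r : Polynomial ℝ) : Polynomial ℝ :=
  ∑ i ∈ Finset.range (P.natDegree + 1), C (P.coeff i) * derivative^[i] r

/-!
Since `(d/dx)^k x^N = N!/(N-k)! · x^(N-k)`, the signed coefficients of `P(d/dx) x^N` are
`a_k = (-1)^k P_k N!/(N-k)!`. Substituted into the definition of `⊞_N`, the factorials cancel and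
the coefficient of `x^(N-k)` becomes `Σ_{i+j=k} P_i Q_j · N!/(N-k)!`, which is the coefficient of
`x^(N-k)` in `(PQ)(d/dx) x^N`; and `(PQ)(d/dx) = P(d/dx) ∘ Q(d/dx)`.
-/

open scoped Nat

lemma applyDiffOp_eq_aeval (P r : ℝ[X]) :
    applyDiffOp P r = aeval (derivative : Module.End ℝ ℝ[X]) P r := by
  rw [aeval_eq_sum_range' (Nat.lt_succ_self P.natDegree), LinearMap.sum_apply]
  refine sum_congr rfl fun i _ => ?_
  rw [LinearMap.smul_apply, Module.End.pow_apply, smul_eq_C_mul]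

lemma applyDiffOp_mul (P Q r : ℝ[X]) :
    applyDiffOp (P * Q) r = applyDiffOp P (applyDiffOp Q r) := by
  simp only [applyDiffOp_eq_aeval, map_mul, Module.End.mul_apply]

lemma applyDiffOp_X_pow (R : ℝ[X]) (N : ℕ) :
    applyDiffOp R (X ^ N) =
      ∑ k ∈ range (N + 1), C (R.coeff k * N.descFactorial k) * X ^ (N - k) := by
  have hR : ∀ k ≥ R.natDegree + 1, C (R.coeff k * N.descFactorial k) * X ^ (N - k) = 0 :=
    fun k hk => by rw [coeff_eq_zero_of_natDegree_lt hk, zero_mul, C_0, zero_mul]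
  have hN : ∀ k ≥ N + 1, C (R.coeff k * N.descFactorial k) * X ^ (N - k) = 0 :=
    fun k hk => by rw [Nat.descFactorial_eq_zero_iff_lt.2 hk, Nat.cast_zero, mul_zero, C_0,
      zero_mul]
  simp only [applyDiffOp, iterate_derivative_X_pow_eq_C_mul, ← mul_assoc, ← C_mul]
  rw [← eventually_constant_sum hR (Nat.le_add_right _ (N + 1)),
    ← eventually_constant_sum hN (Nat.le_add_left _ (R.natDegree + 1))]

lemma coeffSeq_applyDiffOp_X_pow (R : ℝ[X]) {N k : ℕ} (hk : k ≤ N) :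
    coeffSeq N (applyDiffOp R (X ^ N)) k = (-1) ^ k * (R.coeff k * N.descFactorial k) := by
  rw [coeffSeq, applyDiffOp_X_pow, finsetSum_coeff, sum_eq_single_of_mem k
    (mem_range.2 (Nat.lt_succ_of_le hk))]
  · rw [coeff_C_mul_X_pow, if_pos rfl]
  · intro j hj hjk
    rw [coeff_C_mul_X_pow, if_neg (by rw [mem_range] at hj; omega)]

lemma cast_descFactorial_eq_div {N k : ℕ} (hk : k ≤ N) :
    (N.descFactorial k : ℝ) = N ! / (N - k)! := by
  rw [eq_div_iff (by positivity), mul_comm, ← Nat.cast_mul, Nat.factorial_mul_descFactorial hk]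

lemma factorial_div_mul_descFactorial_mul_descFactorial {N i j : ℕ} (hij : i + j ≤ N) :
    ((N - i)! * (N - j)! / (N ! * (N - (i + j))!) : ℝ) *
        (N.descFactorial i * N.descFactorial j) = N.descFactorial (i + j) := by
  rw [cast_descFactorial_eq_div (by omega), cast_descFactorial_eq_div (by omega),
    cast_descFactorial_eq_div hij]
  field_simp

lemma ffconv_applyDiffOp_X_pow (N : ℕ) (P Q : ℝ[X]) (hP0 : P.coeff 0 = 1)
    (hQ0 : Q.coeff 0 = 1) :
    ffconv N (applyDiffOp P (X ^ N)) (applyDiffOp Q (X ^ N)) = applyDiffOp (P * Q) (X ^ N) := by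
  rw [ffconv, applyDiffOp_X_pow (P * Q), range_eq_Ico,
    sum_eq_sum_Ico_succ_bot (by omega : 0 < N + 1), zero_add, Ico_add_one_right_eq_Icc]
  congr 1
  · simp [mul_coeff_zero, hP0, hQ0]
  refine sum_congr rfl fun k hk => ?_
  rw [coeff_mul, sum_mul, mul_sum]
  congr 2
  refine sum_congr rfl fun ⟨i, j⟩ hij => ?_
  obtain rfl : i + j = k := mem_antidiagonal.1 hij
  have hkN : i + j ≤ N := (mem_Icc.1 hk).2
  rw [coeffSeq_applyDiffOp_X_pow P (by omega), coeffSeq_applyDiffOp_X_pow Q (by omega)]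
  have hsign : (-1 : ℝ) ^ (i + j) * ((-1) ^ i * (-1) ^ j) = 1 := by
    rw [← pow_add, ← pow_add, Even.neg_one_pow ⟨i + j, rfl⟩]
  linear_combination (P.coeff i * Q.coeff j * N.descFactorial (i + j)) * hsign +
    (-1 : ℝ) ^ (i + j) * ((-1) ^ i * (-1) ^ j) * P.coeff i * Q.coeff j *
      factorial_div_mul_descFactorial_mul_descFactorial hkN

theorem ffconv_diffOp_general (N : ℕ) (p q P Q : Polynomial ℝ)
    (hP0 : P.coeff 0 = 1) (hQ0 : Q.coeff 0 = 1)
    (hP : applyDiffOp P (X ^ N) = p) (hQ : applyDiffOp Q (X ^ N) = q) :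
    ffconv N p q = applyDiffOp P (applyDiffOp Q (X ^ N)) := by
  rw [← hP, ← hQ, ← applyDiffOp_mul, ffconv_applyDiffOp_X_pow N P Q hP0 hQ0]

/-- if `P(d/dx) x^N = p` and `Q(d/dx) x^N = q`, then
`(p ⊞_N q)(x) = P(d/dx) Q(d/dx) x^N`. -/
theorem ffconv_diffOp (N : ℕ) (p q P Q : Polynomial ℝ)
    (hp : p.Monic) (hq : q.Monic) (hpd : p.natDegree = N) (hqd : q.natDegree = N)
    (hP0 : P.coeff 0 = 1) (hQ0 : Q.coeff 0 = 1)
    (hP : applyDiffOp P (X ^ N) = p) (hQ : applyDiffOp Q (X ^ N) = q) :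
    ffconv N p q = applyDiffOp P (applyDiffOp Q (X ^ N)) :=
  ffconv_diffOp_general N p q P Q hP0 hQ0 hP hQ
end

section
/- Finite free cumulants are additive under finite free convolution: for monic degree-N polynomials p and q, κ_j^N(p ⊞_N q) = κ_j^N(p) + κ_j^N(q) for all 1 ≤ j ≤ N. -/
/-!
Put `c_{N,k} = (N)_k / (N^k k!)` and `w_κ(m) = (-1)^(m-1) N (m-1)! κ_m`. The cumulant relation says
that the normalised coefficient `a_k / c_{N,k}` is the sum over set partitions of `{1,…,k}` of
`∏_V w_κ(|V|)`, and in normalised coefficients `⊞_N` is the binomial convolution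
`Σ_{i+j=k} (k choose i) ã_i b̃_j`. Expanding `∏_V (w_p + w_q)(|V|)` and sorting the blocks by the
summand they pick shows that the partition sums of `w_p + w_q` are exactly this binomial
convolution, so `κ_p + κ_q` is a cumulant sequence of `p ⊞_N q`. Cumulant sequences are unique: the
one-block partition contributes `w_κ(k)`, every other partition involves only `κ_m` with `m < k`,
and `w_κ(k)` determines `κ_k` since `N ≠ 0`.
-/

open Polynomial Finset

theorem Finpartition.sum_card_sub_one {α : Type*} [DecidableEq α] {s : Finset α}
    (P : Finpartition s) : ∑ V ∈ P.parts, (#V - 1) = #s - #P.parts := by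
  rw [sum_tsub_distrib _ fun V hV => (P.nonempty_of_mem_parts hV).card_pos, P.sum_card_parts,
    ← card_eq_sum_ones]

namespace Finset

variable {α β : Type*} [DecidableEq α] [DecidableEq β]

noncomputable def setPartitions (s : Finset α) : Finset (Finset (Finset α)) :=
  univ.image (Finpartition.parts : Finpartition s → Finset (Finset α))

theorem mem_setPartitions {s : Finset α} {A : Finset (Finset α)} :
    A ∈ setPartitions s ↔ (A : Set (Finset α)).PairwiseDisjoint id ∧ A.sup id = s ∧ ∅ ∉ A := by
  rw [← supIndep_iff_pairwiseDisjoint]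
  constructor
  · rintro hA
    obtain ⟨P, -, rfl⟩ := mem_image.1 hA
    exact ⟨P.supIndep, P.sup_parts, P.bot_notMem⟩
  · rintro ⟨hdisj, hsup, hempty⟩
    exact mem_image.2 ⟨⟨A, hdisj, hsup, hempty⟩, mem_univ _, rfl⟩

theorem sum_finpartition_eq_sum_setPartitions {M : Type*} [AddCommMonoid M] (s : Finset α)
    (w : Finset (Finset α) → M) :
    ∑ P : Finpartition s, w P.parts = ∑ A ∈ setPartitions s, w A :=
  (sum_image fun _ _ _ _ h => Finpartition.ext h).symm

variable {s t : Finset α} {A B S : Finset (Finset α)}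

theorem subset_of_mem_setPartitions (hA : A ∈ setPartitions s) {V : Finset α} (hV : V ∈ A) :
    V ⊆ s :=
  (mem_setPartitions.1 hA).2.1 ▸ le_sup (f := id) hV

theorem nonempty_of_mem_setPartitions (hA : A ∈ setPartitions s) {V : Finset α} (hV : V ∈ A) :
    V.Nonempty :=
  nonempty_iff_ne_empty.2 fun h => (mem_setPartitions.1 hA).2.2 (h ▸ hV)

theorem setPartitions_empty : setPartitions (∅ : Finset α) = {∅} := by
  ext A
  refine ⟨fun hA => mem_singleton.2 (eq_empty_of_forall_notMem fun V hV => ?_), fun hA => ?_⟩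
  · exact (nonempty_of_mem_setPartitions hA hV).ne_empty
      (subset_empty.1 (subset_of_mem_setPartitions hA hV))
  · rw [mem_singleton.1 hA, mem_setPartitions]
    simp

theorem singleton_mem_setPartitions (hs : s.Nonempty) : {s} ∈ setPartitions s :=
  mem_setPartitions.2 ⟨by simp, sup_singleton, by simpa [eq_comm] using hs.ne_empty⟩

theorem eq_singleton_of_mem_setPartitions (hA : A ∈ setPartitions s) (hV : s ∈ A) : A = {s} := by
  refine eq_singleton_iff_unique_mem.2 ⟨hV, fun W hW => ?_⟩
  by_contra hne
  obtain ⟨x, hx⟩ := nonempty_of_mem_setPartitions hA hW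
  exact disjoint_left.1 ((mem_setPartitions.1 hA).1 hW hV hne) hx
    (subset_of_mem_setPartitions hA hW hx)

theorem card_lt_of_mem_setPartitions (hA : A ∈ setPartitions s) (hne : A ≠ {s}) {V : Finset α}
    (hV : V ∈ A) : #V < #s := by
  refine (card_le_card (subset_of_mem_setPartitions hA hV)).lt_of_ne fun h => hne ?_
  exact eq_singleton_of_mem_setPartitions hA
    (eq_of_subset_of_card_le (subset_of_mem_setPartitions hA hV) h.ge ▸ hV)

theorem image_map_mem_setPartitions_map_iff (g : α ↪ β) :
    A.image (map g) ∈ setPartitions (s.map g) ↔ A ∈ setPartitions s := by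
  have hinj : Set.InjOn (map g) A := (map_injective g).injOn
  have hsup : (A.image (map g)).sup id = (A.sup id).map g := by
    rw [sup_image, apply_sup_eq_sup_comp (map g) (fun x y => map_union x y) rfl]
    rfl
  simp only [mem_setPartitions, coe_image, hinj.pairwiseDisjoint_image, hsup,
    map_inj, mem_image, map_eq_empty, exists_eq_right]
  simp only [Set.PairwiseDisjoint, Set.Pairwise, Function.onFun, Function.comp_apply, id,
    disjoint_map]

theorem union_mem_setPartitions (hA : A ∈ setPartitions s) (hB : B ∈ setPartitions t)
    (hst : Disjoint s t) : A ∪ B ∈ setPartitions (s ∪ t) := by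
  obtain ⟨hAdisj, rfl, hA₀⟩ := mem_setPartitions.1 hA
  obtain ⟨hBdisj, rfl, hB₀⟩ := mem_setPartitions.1 hB
  refine mem_setPartitions.2 ⟨?_, sup_union, by simp [hA₀, hB₀]⟩
  rw [coe_union, Set.pairwiseDisjoint_union]
  exact ⟨hAdisj, hBdisj, fun V hV W hW _ => hst.mono (le_sup (f := id) hV) (le_sup (f := id) hW)⟩

theorem disjoint_of_mem_setPartitions (hA : A ∈ setPartitions s) (hB : B ∈ setPartitions t)
    (hst : Disjoint s t) : Disjoint A B :=
  disjoint_left.2 fun _ hVA hVB => (nonempty_of_mem_setPartitions hA hVA).ne_empty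
    (disjoint_self.1 (hst.mono (subset_of_mem_setPartitions hA hVA)
      (subset_of_mem_setPartitions hB hVB)))

theorem mem_setPartitions_sup_of_subset (hA : A ∈ setPartitions s) (hS : S ⊆ A) :
    S ∈ setPartitions (S.sup id) := by
  obtain ⟨hdisj, -, hempty⟩ := mem_setPartitions.1 hA
  exact mem_setPartitions.2 ⟨hdisj.subset hS, rfl, fun h => hempty (hS h)⟩

theorem sdiff_mem_setPartitions (hA : A ∈ setPartitions s) (hS : S ⊆ A) :
    A \ S ∈ setPartitions (s \ S.sup id) := by
  obtain ⟨hdisj, hsup, hempty⟩ := mem_setPartitions.1 hA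
  have hdisj' : Disjoint (S.sup id) ((A \ S).sup id) :=
    Finset.disjoint_sup_left.2 fun V hV => Finset.disjoint_sup_right.2 fun W hW =>
      hdisj (hS hV) (mem_sdiff.1 hW).1 fun h => (mem_sdiff.1 hW).2 (h ▸ hV)
  have hs : s = S.sup id ∪ (A \ S).sup id := by
    rw [← sup_eq_union, ← sup_union, union_sdiff_of_subset hS, hsup]
  refine mem_setPartitions.2 ⟨hdisj.subset sdiff_subset, ?_, fun h => hempty (sdiff_subset h)⟩
  rw [hs, union_sdiff_cancel_left hdisj']

variable {R : Type*} [CommSemiring R]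

noncomputable def partitionSum (f : ℕ → R) (s : Finset α) : R :=
  ∑ P : Finpartition s, ∏ V ∈ P.parts, f #V

theorem partitionSum_eq_sum_setPartitions (f : ℕ → R) (s : Finset α) :
    partitionSum f s = ∑ A ∈ setPartitions s, ∏ V ∈ A, f #V :=
  sum_finpartition_eq_sum_setPartitions s fun A => ∏ V ∈ A, f #V

theorem partitionSum_empty (f : ℕ → R) : partitionSum f (∅ : Finset α) = 1 := by
  rw [partitionSum_eq_sum_setPartitions, setPartitions_empty, sum_singleton, prod_empty]

theorem partitionSum_map (f : ℕ → R) (g : α ↪ β) (s : Finset α) :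
    partitionSum f (s.map g) = partitionSum f s := by
  simp only [partitionSum_eq_sum_setPartitions]
  refine (sum_nbij (image (map g)) (fun A hA => (image_map_mem_setPartitions_map_iff g).2 hA)
    (image_injective (map_injective g)).injOn (fun B hB => ?_) fun A _ => ?_).symm
  · have hBsub : B ⊆ s.powerset.image (map g) := fun V hV => by
      obtain ⟨u, hu, rfl⟩ := subset_map_iff.1 (subset_of_mem_setPartitions hB hV)
      exact mem_image_of_mem _ (mem_powerset.2 hu)
    obtain ⟨A, -, rfl⟩ := subset_image_iff.1 hBsub
    exact ⟨A, (image_map_mem_setPartitions_map_iff g).1 hB, rfl⟩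
  · rw [prod_image fun _ _ _ _ h => map_injective g h]
    simp only [card_map]

theorem partitionSum_eq_partitionSum_univ_fin (f : ℕ → R) (s : Finset α) :
    partitionSum f s = partitionSum f (univ : Finset (Fin #s)) := by
  let e : Fin #s ↪ α := s.equivFin.symm.toEmbedding.trans (Function.Embedding.subtype _)
  have hs : univ.map e = s := by
    rw [← map_map, map_univ_equiv, univ_eq_attach, attach_map_val]
  rw [← partitionSum_map f e univ, hs]

theorem partitionSum_add (f g : ℕ → R) (s : Finset α) :
    partitionSum (f + g) s = ∑ I ∈ s.powerset, partitionSum f I * partitionSum g (s \ I) := by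
  have hrhs : ∀ I ∈ s.powerset, partitionSum f I * partitionSum g (s \ I) =
      ∑ P ∈ setPartitions I ×ˢ setPartitions (s \ I), (∏ V ∈ P.1, f #V) * ∏ V ∈ P.2, g #V :=
    fun I _ => by
      rw [partitionSum_eq_sum_setPartitions, partitionSum_eq_sum_setPartitions, sum_mul_sum,
        sum_product]
  rw [sum_congr rfl hrhs, partitionSum_eq_sum_setPartitions]
  simp only [Pi.add_apply, prod_add]
  rw [sum_sigma', sum_sigma']
  -- A partition `A` of `s` with a set `S ⊆ A` of blocks is the same as a subset `I ⊆ s`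
  -- (the union of `S`) with a partition of `I` and a partition of `s \ I`.
  refine sum_nbij' (fun x => ⟨x.2.sup id, (x.2, x.1 \ x.2)⟩) (fun y => ⟨y.2.1 ∪ y.2.2, y.2.1⟩)
    ?_ ?_ ?_ ?_ fun _ _ => rfl
  · rintro ⟨A, S⟩ hx
    obtain ⟨hA, hS⟩ := mem_sigma.1 hx
    have hS : S ⊆ A := mem_powerset.1 hS
    refine mem_sigma.2 ⟨?_, mem_product.2 ⟨mem_setPartitions_sup_of_subset hA hS,
      sdiff_mem_setPartitions hA hS⟩⟩
    exact mem_powerset.2 ((mem_setPartitions.1 hA).2.1 ▸ sup_mono hS)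
  · rintro ⟨I, A₁, A₂⟩ hy
    obtain ⟨hI, hy⟩ := mem_sigma.1 hy
    obtain ⟨hA₁, hA₂⟩ := mem_product.1 hy
    have hA := union_mem_setPartitions hA₁ hA₂ disjoint_sdiff
    rw [union_sdiff_of_subset (mem_powerset.1 hI)] at hA
    exact mem_sigma.2 ⟨hA, mem_powerset.2 subset_union_left⟩
  · rintro ⟨A, S⟩ hx
    simp [union_sdiff_of_subset (mem_powerset.1 (mem_sigma.1 hx).2)]
  · rintro ⟨I, A₁, A₂⟩ hy
    obtain ⟨-, hy⟩ := mem_sigma.1 hy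
    obtain ⟨hA₁, hA₂⟩ := mem_product.1 hy
    simp [(mem_setPartitions.1 hA₁).2.1,
      union_sdiff_cancel_left (disjoint_of_mem_setPartitions hA₁ hA₂ disjoint_sdiff)]

theorem partitionSum_add_univ_fin (f g : ℕ → R) (k : ℕ) :
    partitionSum (f + g) (univ : Finset (Fin k)) =
      ∑ ij ∈ antidiagonal k, k.choose ij.1 *
        (partitionSum f (univ : Finset (Fin ij.1)) * partitionSum g (univ : Finset (Fin ij.2))) := by
  have hterm : ∀ I ∈ (univ : Finset (Fin k)).powerset,
      partitionSum f I * partitionSum g (univ \ I) =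
        partitionSum f (univ : Finset (Fin #I)) * partitionSum g (univ : Finset (Fin (k - #I))) :=
    fun I _ => by
      rw [partitionSum_eq_partitionSum_univ_fin f, partitionSum_eq_partitionSum_univ_fin g,
        card_univ_sdiff, Fintype.card_fin]
  rw [partitionSum_add, sum_congr rfl hterm,
    sum_powerset_apply_card (fun i => partitionSum f (univ : Finset (Fin i)) *
      partitionSum g (univ : Finset (Fin (k - i)))),
    Nat.sum_antidiagonal_eq_sum_range_succ_mk]
  simp [nsmul_eq_mul]

theorem partitionSum_eq_partitionSum_iff [IsRightCancelAdd R] {f g : ℕ → R} {s : Finset α}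
    (hs : s.Nonempty) (hfg : ∀ m, 0 < m → m < #s → f m = g m) :
    partitionSum f s = partitionSum g s ↔ f #s = g #s := by
  have hsplit : ∀ h : ℕ → R,
      partitionSum h s = h #s + ∑ A ∈ (setPartitions s).erase {s}, ∏ V ∈ A, h #V := fun h => by
    rw [partitionSum_eq_sum_setPartitions, ← add_sum_erase _ _ (singleton_mem_setPartitions hs),
      prod_singleton]
  have hrest : ∑ A ∈ (setPartitions s).erase {s}, ∏ V ∈ A, f #V =
      ∑ A ∈ (setPartitions s).erase {s}, ∏ V ∈ A, g #V :=
    sum_congr rfl fun A hA => prod_congr rfl fun V hV =>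
      hfg _ (nonempty_of_mem_setPartitions (mem_of_mem_erase hA) hV).card_pos
        (card_lt_of_mem_setPartitions (mem_of_mem_erase hA) (ne_of_mem_erase hA) hV)
  rw [hsplit f, hsplit g, hrest, add_left_inj]

end Finset

open scoped Nat

noncomputable def cumulantWeight (N : ℕ) (κ : ℕ → ℝ) (m : ℕ) : ℝ :=
  (-1) ^ (m - 1) * N * ((m - 1)! * κ m)

noncomputable def cumulantPrefactor (N k : ℕ) : ℝ :=
  N.descFactorial k / (N ^ k * k !)

theorem cumulantWeight_add (N : ℕ) (κ κ' : ℕ → ℝ) :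
    cumulantWeight N (κ + κ') = cumulantWeight N κ + cumulantWeight N κ' := by
  funext m
  simp only [cumulantWeight, Pi.add_apply]
  ring

theorem cumulantWeight_eq_iff {N : ℕ} (hN : N ≠ 0) {κ κ' : ℕ → ℝ} {m : ℕ} :
    cumulantWeight N κ m = cumulantWeight N κ' m ↔ κ m = κ' m := by
  simp [cumulantWeight, hN, Nat.factorial_ne_zero]

theorem sum_finpartition_eq_partitionSum_cumulantWeight (N k : ℕ) (κ : ℕ → ℝ) :
    ∑ π : Finpartition (univ : Finset (Fin k)),
        (-1 : ℝ) ^ (k - #π.parts) * (N : ℝ) ^ #π.parts *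
          ∏ V ∈ π.parts, ((#V - 1)! * κ #V) =
      partitionSum (cumulantWeight N κ) (univ : Finset (Fin k)) := by
  refine sum_congr rfl fun π _ => ?_
  simp only [cumulantWeight, prod_mul_distrib, prod_const, prod_pow_eq_pow_sum,
    π.sum_card_sub_one, card_fin]

theorem cumulantRel_iff_partitionSum {N : ℕ} {a κ : ℕ → ℝ} :
    cumulantRel N a κ ↔ ∀ k, 1 ≤ k → k ≤ N →
      a k = cumulantPrefactor N k * partitionSum (cumulantWeight N κ) (univ : Finset (Fin k)) := by
  simp only [cumulantRel, sum_finpartition_eq_partitionSum_cumulantWeight, cumulantPrefactor]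

theorem cumulantPrefactor_zero (N : ℕ) : cumulantPrefactor N 0 = 1 := by
  simp [cumulantPrefactor]

theorem cumulantPrefactor_ne_zero {N k : ℕ} (hk : k ≤ N) : cumulantPrefactor N k ≠ 0 := by
  have hdesc : 0 < N.descFactorial k := Nat.descFactorial_pos.2 hk
  have hpow : (0 : ℝ) < N ^ k := mod_cast hdesc.trans_le (Nat.descFactorial_le_pow N k)
  unfold cumulantPrefactor
  positivity

theorem cumulantPrefactor_eq {N k : ℕ} (hk : k ≤ N) :
    cumulantPrefactor N k = N ! / ((N - k)! * N ^ k * k !) := by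
  rw [cumulantPrefactor, ← Nat.factorial_mul_descFactorial hk, Nat.cast_mul, mul_assoc,
    mul_div_mul_left _ _ (by positivity)]

theorem cumulantPrefactor_mul_choose {N i j k : ℕ} (hij : i + j = k) (hk : k ≤ N) :
    cumulantPrefactor N k * k.choose i =
      (N - i)! * (N - j)! / (N ! * (N - k)!) * cumulantPrefactor N i * cumulantPrefactor N j := by
  subst hij
  rw [cumulantPrefactor_eq hk, cumulantPrefactor_eq (by omega), cumulantPrefactor_eq (by omega),
    Nat.cast_choose ℝ (Nat.le_add_right i j), Nat.add_sub_cancel_left]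
  rcases N.eq_zero_or_pos with rfl | hN
  · obtain ⟨rfl, rfl⟩ : i = 0 ∧ j = 0 := by omega
    simp
  · field_simp
    ring

theorem cumulantRel_unique {N : ℕ} {a κ κ' : ℕ → ℝ} (h : cumulantRel N a κ)
    (h' : cumulantRel N a κ') : ∀ j, 1 ≤ j → j ≤ N → κ j = κ' j := by
  rw [cumulantRel_iff_partitionSum] at h h'
  intro j
  induction j using Nat.strong_induction_on with
  | _ j ih =>
    intro hj hjN
    have hN : N ≠ 0 := by omega
    have hsum : partitionSum (cumulantWeight N κ) (univ : Finset (Fin j)) =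
        partitionSum (cumulantWeight N κ') univ :=
      mul_left_cancel₀ (cumulantPrefactor_ne_zero hjN) ((h j hj hjN).symm.trans (h' j hj hjN))
    have hlower : ∀ m, 0 < m → m < #(univ : Finset (Fin j)) →
        cumulantWeight N κ m = cumulantWeight N κ' m := fun m hm hmj => by
      rw [card_fin] at hmj
      exact (cumulantWeight_eq_iff hN).2 (ih m hmj hm (by omega))
    rwa [partitionSum_eq_partitionSum_iff (univ_nonempty_iff.2 ⟨⟨0, hj⟩⟩) hlower, card_fin,
      cumulantWeight_eq_iff hN] at hsum

theorem coeffSeq_zero {N : ℕ} {p : Polynomial ℝ} (hp : p.Monic) (hpd : p.natDegree = N) :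
    coeffSeq N p 0 = 1 := by
  rw [coeffSeq, pow_zero, one_mul, Nat.sub_zero, ← hpd, hp.coeff_natDegree]

theorem coeffSeq_ffconv (N : ℕ) (p q : Polynomial ℝ) {k : ℕ} (hk : 1 ≤ k) (hkN : k ≤ N) :
    coeffSeq N (ffconv N p q) k =
      ∑ ij ∈ antidiagonal k, (N - ij.1)! * (N - ij.2)! / (N ! * (N - k)!) *
        coeffSeq N p ij.1 * coeffSeq N q ij.2 := by
  rw [coeffSeq, ffconv, coeff_add, coeff_X_pow, if_neg (by omega), zero_add, finsetSum_coeff,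
    sum_eq_single_of_mem k (mem_Icc.2 ⟨hk, hkN⟩) fun k' hk' hne => ?_, coeff_C_mul_X_pow,
    if_pos rfl, ← mul_assoc, ← mul_pow]
  · simp
  · rw [coeff_C_mul_X_pow, if_neg]
    rw [mem_Icc] at hk'
    omega

theorem coeffSeq_eq_of_cumulantRel {N : ℕ} {p : Polynomial ℝ} {κ : ℕ → ℝ} (hp : p.Monic)
    (hpd : p.natDegree = N) (hκ : cumulantRel N (coeffSeq N p) κ) {k : ℕ} (hk : k ≤ N) :
    coeffSeq N p k =
      cumulantPrefactor N k * partitionSum (cumulantWeight N κ) (univ : Finset (Fin k)) := by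
  rcases k.eq_zero_or_pos with rfl | hk₀
  · rw [coeffSeq_zero hp hpd, cumulantPrefactor_zero, univ_eq_empty, partitionSum_empty, mul_one]
  · exact cumulantRel_iff_partitionSum.1 hκ k hk₀ hk

theorem cumulantRel_ffconv {N : ℕ} {p q : Polynomial ℝ} {κp κq : ℕ → ℝ} (hp : p.Monic)
    (hq : q.Monic) (hpd : p.natDegree = N) (hqd : q.natDegree = N)
    (hκp : cumulantRel N (coeffSeq N p) κp) (hκq : cumulantRel N (coeffSeq N q) κq) :
    cumulantRel N (coeffSeq N (ffconv N p q)) (κp + κq) := by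
  rw [cumulantRel_iff_partitionSum]
  intro k hk hkN
  rw [coeffSeq_ffconv N p q hk hkN, cumulantWeight_add, partitionSum_add_univ_fin, mul_sum]
  refine sum_congr rfl fun ij hij => ?_
  have hij : ij.1 + ij.2 = k := mem_antidiagonal.1 hij
  rw [coeffSeq_eq_of_cumulantRel hp hpd hκp (by omega),
    coeffSeq_eq_of_cumulantRel hq hqd hκq (by omega)]
  linear_combination (-(partitionSum (cumulantWeight N κp) (univ : Finset (Fin ij.1)) *
    partitionSum (cumulantWeight N κq) (univ : Finset (Fin ij.2)))) *
    cumulantPrefactor_mul_choose hij hkN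

/-- finite free cumulants are additive under `⊞_N`. -/
theorem cumulants_additive (N : ℕ) (p q : Polynomial ℝ)
    (hp : p.Monic) (hq : q.Monic) (hpd : p.natDegree = N) (hqd : q.natDegree = N)
    (κp κq κpq : ℕ → ℝ)
    (hκp : cumulantRel N (coeffSeq N p) κp)
    (hκq : cumulantRel N (coeffSeq N q) κq)
    (hκpq : cumulantRel N (coeffSeq N (ffconv N p q)) κpq) :
    ∀ j, 1 ≤ j → j ≤ N → κpq j = κp j + κq j :=
  cumulantRel_unique hκpq (cumulantRel_ffconv hp hq hpd hqd hκp hκq)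
end
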